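/- arXiv:math/0604052 — 5 statements merged into one kernel-verified Lean document; each statement's English description precedes it below -/
import Mathlib

section
/- Given a continuous function f on [0,∞) with f(0) ≥ 0, the function L(t) = max(0, max_{0≤s≤t}(-f(s))) is the unique continuous function satisfying: (1) x(t) := f(t) + L(t) ≥ 0 for all t; (2) L(0) = 0 and L is nondecreasing; (3) L is flat off the zero set of x, i.e., L is constant on any interval where x > 0. -/
open Set

/-- The Skorohod reflection term `Lf(t) = max(0, max_{0 ≤ s ≤ t} (-f(s)))`. -/
noncomputable def skorohodL (f : ℝ → ℝ) (t : ℝ) : ℝ :=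
  max 0 (sSup ((fun s => -f s) '' Icc 0 t))

/-!
`skorohodL f` is `max 0` of the running maximum of `-f`, which is continuous because rescaling
`[0, t]` to `[0, 1]` turns it into a supremum over a fixed compact set. It can only increase at a
time `s` where it equals `-f s`, i.e. where `f s + skorohodL f s = 0`.

Uniqueness is a comparison argument: let `L` be flat off the zeros of `f + L` and `K`
nondecreasing with `f + K ≥ 0` and `L 0 ≤ K 0`. If `K t < L t`, take the last `s ≤ t` with
`L s ≤ K s`; on `(s, t]` we have `f + L > f + K ≥ 0`, so `L` is constant there and
`L t = L s ≤ K s ≤ K t`.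
-/

noncomputable def runningSup (g : ℝ → ℝ) (t : ℝ) : ℝ :=
  sSup (g '' Icc 0 t)

def FlatOffZeros (f L : ℝ → ℝ) : Prop :=
  ∀ a b, 0 ≤ a → a ≤ b → (∀ t ∈ Icc a b, 0 < f t + L t) → L b = L a

structure IsSkorohodReflection (f L : ℝ → ℝ) : Prop where
  continuousOn : ContinuousOn L (Ici 0)
  add_nonneg : ∀ t ≥ 0, 0 ≤ f t + L t
  zero : L 0 = 0
  monotoneOn : MonotoneOn L (Ici 0)
  flatOffZeros : FlatOffZeros f L

theorem le_runningSup {g : ℝ → ℝ} (hg : ContinuousOn g (Ici 0)) {s t : ℝ} (hs : s ∈ Icc 0 t) :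
    g s ≤ runningSup g t :=
  le_csSup (isCompact_Icc.bddAbove_image (hg.mono Icc_subset_Ici_self)) (mem_image_of_mem g hs)

theorem monotoneOn_runningSup {g : ℝ → ℝ} (hg : ContinuousOn g (Ici 0)) :
    MonotoneOn (runningSup g) (Ici 0) := fun _ hu _ _ huv =>
  csSup_le_csSup (isCompact_Icc.bddAbove_image (hg.mono Icc_subset_Ici_self))
    ((nonempty_Icc.mpr hu).image g) (image_mono (Icc_subset_Icc_right huv))

theorem exists_eq_runningSup {g : ℝ → ℝ} (hg : ContinuousOn g (Ici 0)) {t : ℝ} (ht : 0 ≤ t) :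
    ∃ s ∈ Icc 0 t, g s = runningSup g t :=
  (isCompact_Icc.image_of_continuousOn (hg.mono Icc_subset_Ici_self)).sSup_mem
    ((nonempty_Icc.mpr ht).image g)

theorem continuousOn_runningSup {g : ℝ → ℝ} (hg : ContinuousOn g (Ici 0)) :
    ContinuousOn (runningSup g) (Ici 0) := by
  set g' : ℝ → ℝ := fun s => g (max s 0)
  have hg' : Continuous g' :=
    hg.comp_continuous (continuous_id.max continuous_const) fun s => le_max_right s 0
  have hcont : Continuous fun t => sSup ((fun u => g' (u * t)) '' Icc 0 1) :=
    isCompact_Icc.continuous_sSup (hg'.comp (continuous_snd.mul continuous_fst))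
  refine hcont.continuousOn.congr fun t (ht : 0 ≤ t) => ?_
  have hscale : (· * t) '' Icc (0 : ℝ) 1 = Icc 0 t := by
    rw [image_mul_right_Icc zero_le_one ht, zero_mul, one_mul]
  have hg'g : EqOn g' g (Icc 0 t) := fun s hs => by simp only [g', max_eq_left hs.1]
  rw [runningSup, ← hg'g.image_eq, ← hscale, image_image]

section skorohodL

variable {f : ℝ → ℝ}

theorem skorohodL_eq (f : ℝ → ℝ) (t : ℝ) : skorohodL f t = max 0 (runningSup (-f) t) :=
  rfl

theorem neg_le_skorohodL (hf : ContinuousOn f (Ici 0)) {t : ℝ} (ht : 0 ≤ t) :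
    -f t ≤ skorohodL f t :=
  (le_runningSup hf.neg ⟨ht, le_rfl⟩).trans (le_max_right _ _)

theorem skorohodL_zero (hf0 : 0 ≤ f 0) : skorohodL f 0 = 0 := by
  rw [skorohodL, Icc_self, image_singleton, csSup_singleton, max_eq_left (neg_nonpos.mpr hf0)]

theorem monotoneOn_skorohodL (hf : ContinuousOn f (Ici 0)) :
    MonotoneOn (skorohodL f) (Ici 0) := fun _ hu _ hv huv =>
  max_le_max le_rfl (monotoneOn_runningSup hf.neg hu hv huv)

theorem continuousOn_skorohodL (hf : ContinuousOn f (Ici 0)) :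
    ContinuousOn (skorohodL f) (Ici 0) :=
  continuousOn_const.sup (continuousOn_runningSup hf.neg)

theorem flatOffZeros_skorohodL (hf : ContinuousOn f (Ici 0)) : FlatOffZeros f (skorohodL f) := by
  intro a b ha hab hpos
  have hb : 0 ≤ b := ha.trans hab
  by_contra hne
  have hlt : skorohodL f a < skorohodL f b :=
    (monotoneOn_skorohodL hf ha hb hab).lt_of_ne' hne
  obtain ⟨s, hs, hfs⟩ := exists_eq_runningSup hf.neg hb
  have hLb : skorohodL f b = -f s := by
    have hLb_pos : 0 < skorohodL f b := (le_max_left _ _).trans_lt hlt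
    rw [skorohodL_eq, lt_max_iff, or_iff_right (lt_irrefl 0)] at hLb_pos
    rw [skorohodL_eq, max_eq_right hLb_pos.le, ← hfs, Pi.neg_apply]
  have has : a ≤ s := by
    by_contra! hsa
    have h1 : -f s ≤ runningSup (-f) a := le_runningSup hf.neg ⟨hs.1, hsa.le⟩
    have h2 : runningSup (-f) a ≤ skorohodL f a := le_max_right _ _
    linarith
  have hx_pos := hpos s ⟨has, hs.2⟩
  have hLs_le := monotoneOn_skorohodL hf hs.1 hb hs.2
  linarith

theorem isSkorohodReflection_skorohodL (hf : ContinuousOn f (Ici 0)) (hf0 : 0 ≤ f 0) :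
    IsSkorohodReflection f (skorohodL f) where
  continuousOn := continuousOn_skorohodL hf
  add_nonneg _ ht := neg_le_iff_add_nonneg'.mp (neg_le_skorohodL hf ht)
  zero := skorohodL_zero hf0
  monotoneOn := monotoneOn_skorohodL hf
  flatOffZeros := flatOffZeros_skorohodL hf

end skorohodL

theorem le_of_flatOffZeros {f L K : ℝ → ℝ} (hL : ContinuousOn L (Ici 0))
    (hL_flat : FlatOffZeros f L) (hK : ContinuousOn K (Ici 0)) (hK_mono : MonotoneOn K (Ici 0))
    (hfK : ∀ t ≥ 0, 0 ≤ f t + K t) (h0 : L 0 ≤ K 0) {t : ℝ} (ht : 0 ≤ t) : L t ≤ K t := by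
  by_contra! hlt
  set S := {u ∈ Icc 0 t | L u ≤ K u}
  have hS : IsCompact S := isCompact_Icc.of_isClosed_subset
    (isClosed_Icc.isClosed_le (hL.mono Icc_subset_Ici_self) (hK.mono Icc_subset_Ici_self))
    (sep_subset _ _)
  obtain ⟨⟨hs0, hs_le⟩, hLKs⟩ : sSup S ∈ S := hS.sSup_mem ⟨0, ⟨le_rfl, ht⟩, h0⟩
  set s := sSup S
  have hst : s < t := hs_le.lt_of_ne fun h => by rw [h] at hLKs; exact hlt.not_ge hLKs
  have hKL : ∀ u ∈ Ioc s t, K u < L u := fun u hu => by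
    by_contra! h
    exact hu.1.not_ge (le_csSup hS.bddAbove ⟨⟨hs0.trans hu.1.le, hu.2⟩, h⟩)
  have hL_const : EqOn L (fun _ => L t) (Ioc s t) := fun u hu =>
    (hL_flat u t (hs0.trans hu.1.le) hu.2 fun v hv =>
      have hv' : v ∈ Ioc s t := ⟨hu.1.trans_le hv.1, hv.2⟩
      (hfK v (hs0.trans hv'.1.le)).trans_lt (add_lt_add_right (hKL v hv') _)).symm
  have hLs : L s = L t := hL_const.of_subset_closure (hL.mono fun u hu => hs0.trans hu.1)
    continuousOn_const Ioc_subset_Icc_self (closure_Ioc hst.ne).superset ⟨le_rfl, hst.le⟩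
  linarith [hK_mono hs0 ht hst.le]

theorem IsSkorohodReflection.eqOn {f L K : ℝ → ℝ} (hL : IsSkorohodReflection f L)
    (hK : IsSkorohodReflection f K) : EqOn L K (Ici 0) := fun _ ht =>
  le_antisymm
    (le_of_flatOffZeros hL.continuousOn hL.flatOffZeros hK.continuousOn hK.monotoneOn
      hK.add_nonneg (hL.zero.trans hK.zero.symm).le ht)
    (le_of_flatOffZeros hK.continuousOn hK.flatOffZeros hL.continuousOn hL.monotoneOn
      hL.add_nonneg (hK.zero.trans hL.zero.symm).le ht)

/-- The classical Skorohod Lemma: `skorohodL f` satisfies the three conditions, and is the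
unique continuous function doing so. -/
theorem skorohod_lemma (f : ℝ → ℝ) (hf : ContinuousOn f (Ici 0)) (hf0 : 0 ≤ f 0) :
    (ContinuousOn (skorohodL f) (Ici 0) ∧
      (∀ t ≥ 0, 0 ≤ f t + skorohodL f t) ∧
      skorohodL f 0 = 0 ∧ MonotoneOn (skorohodL f) (Ici 0) ∧
      (∀ a b, 0 ≤ a → a ≤ b → (∀ t ∈ Icc a b, 0 < f t + skorohodL f t) →
        skorohodL f b = skorohodL f a)) ∧
    ∀ L : ℝ → ℝ, ContinuousOn L (Ici 0) →
      (∀ t ≥ 0, 0 ≤ f t + L t) → L 0 = 0 → MonotoneOn L (Ici 0) →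
      (∀ a b, 0 ≤ a → a ≤ b → (∀ t ∈ Icc a b, 0 < f t + L t) → L b = L a) →
      ∀ t ≥ 0, L t = skorohodL f t := by
  have h := isSkorohodReflection_skorohodL hf hf0
  refine ⟨⟨h.continuousOn, h.add_nonneg, h.zero, h.monotoneOn, h.flatOffZeros⟩, ?_⟩
  intro L hL_cont hL_nonneg hL_zero hL_mono hL_flat t ht
  exact IsSkorohodReflection.eqOn ⟨hL_cont, hL_nonneg, hL_zero, hL_mono, hL_flat⟩ h ht
end

section
/- Let f be continuous on [0,∞) with f(0) ≥ 0, and let 0 ≤ S < T. Then Lf(T) - Lf(S) ≤ max_{S ≤ r ≤ T} (f(S) - f(r)), where Lf(t) = max(0, max_{0≤s≤t}(-f(s))). -/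
open Set

/-- The increment of the Skorohod reflection term is bounded by the maximal decrease of `f`:
`Lf(T) - Lf(S) ≤ max_{S ≤ r ≤ T} (f(S) - f(r))`. -/
theorem skorohodL_increment_le (f : ℝ → ℝ) (hf : ContinuousOn f (Ici 0)) (hf0 : 0 ≤ f 0)
    (S T : ℝ) (hS : 0 ≤ S) (hST : S < T) :
    skorohodL f T - skorohodL f S ≤ sSup ((fun r => f S - f r) '' Icc S T) := by
  have hT : (0:ℝ) ≤ T := hS.trans hST.le
  set g : ℝ → ℝ := fun s => -f s with hg
  have hcg : ContinuousOn g (Ici 0) := hf.neg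
  have hbS : BddAbove (g '' Icc 0 S) :=
    ((isCompact_Icc.image_of_continuousOn (hcg.mono (Icc_subset_Ici_self))).bddAbove)
  have hbT : BddAbove (g '' Icc 0 T) :=
    ((isCompact_Icc.image_of_continuousOn (hcg.mono (Icc_subset_Ici_self))).bddAbove)
  have hbM : BddAbove ((fun r => f S - f r) '' Icc S T) := by
    refine (isCompact_Icc.image_of_continuousOn ?_).bddAbove
    exact (continuousOn_const.sub (hf.mono (fun x hx => hS.trans hx.1)))
  have hM0 : (0:ℝ) ≤ sSup ((fun r => f S - f r) '' Icc S T) := by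
    have : f S - f S ∈ (fun r => f S - f r) '' Icc S T :=
      ⟨S, ⟨le_refl S, hST.le⟩, rfl⟩
    have := le_csSup hbM this
    linarith
  have hA' : g S ≤ sSup (g '' Icc 0 S) :=
    le_csSup hbS ⟨S, ⟨hS, le_refl S⟩, rfl⟩
  have hA'le : sSup (g '' Icc 0 S) ≤ skorohodL f S := le_max_right _ _
  have hAS0 : (0:ℝ) ≤ skorohodL f S := le_max_left _ _
  set M := sSup ((fun r => f S - f r) '' Icc S T) with hMdef
  have key : skorohodL f T ≤ skorohodL f S + M := by
    rw [skorohodL]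
    refine max_le (by linarith) ?_
    refine Real.sSup_le ?_ (by linarith)
    rintro x ⟨r, ⟨hr0, hrT⟩, rfl⟩
    rcases le_total r S with h | h
    · have : g r ≤ sSup (g '' Icc 0 S) := le_csSup hbS ⟨r, ⟨hr0, h⟩, rfl⟩
      linarith
    · have h1 : f S - f r ≤ M := le_csSup hbM ⟨r, ⟨h, hrT⟩, rfl⟩
      have h2 : g S ≤ skorohodL f S := hA'.trans hA'le
      have : g r = (f S - f r) + g S := by simp [hg]; ring
      linarith
  linarith
end

section
/- With f(t) = -t, μ(l) = 1 - √l, the functions L(t) = 0 and L̃(t) = t²/4 both satisfy x(t) = f(t) + L(t) + ∫₀ᵗ μ(L(s)) ds = 0 for all t ≥ 0, are nondecreasing and continuous with L(0) = 0, and are flat off {t : x(t) = 0}. Hence uniqueness for the Skorohod problem with local-time-dependent drift fails when μ is not locally Lipschitz. -/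
open Set

lemma int2 (t : ℝ) (ht : 0 ≤ t) :
    ∫ s in (0:ℝ)..t, (1 - Real.sqrt (s ^ 2 / 4)) = t - t ^ 2 / 4 := by
  have h : ∫ s in (0:ℝ)..t, (1 - Real.sqrt (s ^ 2 / 4)) = ∫ s in (0:ℝ)..t, (1 - s / 2) := by
    apply intervalIntegral.integral_congr
    intro s hs
    rw [uIcc_of_le ht] at hs
    have hs0 : 0 ≤ s := hs.1
    have : s ^ 2 / 4 = (s / 2) ^ 2 := by ring
    simp [this, Real.sqrt_sq (by linarith : (0:ℝ) ≤ s / 2)]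
  rw [h]
  have h1 : ∫ s in (0:ℝ)..t, (1 - s / 2) =
      (∫ _ in (0:ℝ)..t, (1:ℝ)) - ∫ s in (0:ℝ)..t, s / 2 := by
    apply intervalIntegral.integral_sub intervalIntegrable_const
    exact (intervalIntegral.intervalIntegrable_id).div_const 2
  rw [h1]
  simp [intervalIntegral.integral_div, integral_id]
  ring

/-- Non-uniqueness for the Skorohod problem with local-time-dependent drift: with
`f(t) = -t` and `μ(l) = 1 - √l`, both `L ≡ 0` and `L̃(t) = t²/4` solve the problem,
with `x ≡ 0` in both cases. -/
theorem skorohod_drift_nonunique :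
    ∀ L : ℝ → ℝ, (L = fun _ => 0) ∨ (L = fun t => t ^ 2 / 4) →
      (∀ t ≥ (0:ℝ), (-t) + L t + ∫ s in (0:ℝ)..t, (1 - Real.sqrt (L s)) = 0) ∧
      L 0 = 0 ∧ MonotoneOn L (Ici 0) ∧ Continuous L ∧
      (∀ a b : ℝ, 0 ≤ a → a ≤ b →
        (∀ t ∈ Icc a b, 0 < (-t) + L t + ∫ s in (0:ℝ)..t, (1 - Real.sqrt (L s))) →
        L b = L a) := by
  intro L hL
  have hx : ∀ t ≥ (0:ℝ), (-t) + L t + ∫ s in (0:ℝ)..t, (1 - Real.sqrt (L s)) = 0 := by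
    intro t ht
    rcases hL with h | h
    · subst h; simp
    · subst h
      simp only
      rw [int2 t ht]
      ring
  refine ⟨hx, ?_, ?_, ?_, ?_⟩
  · rcases hL with h | h <;> subst h <;> norm_num
  · rcases hL with h | h <;> subst h
    · exact monotoneOn_const
    · intro a ha b hb hab
      simp only
      have : a ^ 2 ≤ b ^ 2 := by nlinarith [mem_Ici.mp ha]
      linarith
  · rcases hL with h | h <;> subst h
    · exact continuous_const
    · continuity
  · intro a b ha hab hpos
    exfalso
    have := hpos a ⟨le_refl a, hab⟩
    have := hx a ha
    linarith
end

section
/- With f(t) = -t and μ(l) = -l², the function L(t) = tan t satisfies -t + tan t - ∫₀ᵗ tan²(s) ds = 0 for all 0 ≤ t < π/2; that is, L(t) = tan t solves the extended Skorohod problem with x ≡ 0 on [0, π/2), and L blows up as t → π/2. -/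
open Set Real Filter

lemma hasDerivAt_tan_sub_id {x : ℝ} (hx : cos x ≠ 0) :
    HasDerivAt (fun u => tan u - u) (tan x ^ 2) x := by
  have h := (hasDerivAt_tan hx).sub (hasDerivAt_id x)
  rwa [one_div, ← inv_one_add_tan_sq hx, inv_inv, add_sub_cancel_left] at h

lemma integral_tan_sq {a b : ℝ} (ha : a ∈ Ioo (-(π / 2)) (π / 2))
    (hb : b ∈ Ioo (-(π / 2)) (π / 2)) :
    ∫ s in a..b, tan s ^ 2 = (tan b - b) - (tan a - a) := by
  have hcos : ∀ s ∈ uIcc a b, cos s ≠ 0 := fun s hs =>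
    (cos_pos_of_mem_Ioo (ordConnected_Ioo.uIcc_subset ha hb hs)).ne'
  refine intervalIntegral.integral_eq_sub_of_hasDerivAt
    (fun s hs => hasDerivAt_tan_sub_id (hcos s hs)) ?_
  exact (ContinuousOn.pow (fun s hs =>
    (continuousAt_tan.2 (hcos s hs)).continuousWithinAt) 2).intervalIntegrable

/-- Blow-up of the reflection term: with `f(t) = -t` and `μ(l) = -l²`, the function
`L(t) = tan t` satisfies `-t + tan t - ∫₀ᵗ tan² s ds = 0` on `[0, π/2)` (so `x ≡ 0` there),
and `L` blows up as `t → (π/2)⁻`. -/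
theorem skorohod_drift_blowup :
    (∀ t ∈ Ico (0:ℝ) (π / 2),
      (-t) + Real.tan t - ∫ s in (0:ℝ)..t, (Real.tan s) ^ 2 = 0) ∧
    Tendsto Real.tan (nhdsWithin (π / 2) (Iio (π / 2))) atTop := by
  refine ⟨fun t ⟨ht0, htπ⟩ => ?_, tendsto_tan_pi_div_two⟩
  have hπ := pi_pos
  rw [integral_tan_sq ⟨by linarith, by linarith⟩ ⟨by linarith, htπ⟩, tan_zero]
  ring
end

section
/- For all v ∈ ℝ and l > 0 (with the value at v = 0 defined by continuity), the partial derivatives satisfy 0 ≤ ∂_v (v e^{vl}/sinh(vl)) ≤ 2 and -2 ≤ ∂_v (v e^{-vl}/sinh(vl)) ≤ 0. In particular, a(·,l) is nondecreasing and b(·,l) is nonincreasing in v. -/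
/-!
With the Bernoulli function `B x = x / (eˣ - 1)` one has `b v = B (2lv) / l` and `a v = b (-v)`.
`B` is antitone, because the numerator `eˣ - 1 - x eˣ` of its derivative is `≤ 0` by `1 - x ≤ e⁻ˣ`;
hence `a` is monotone and `b` antitone, which gives `0 ≤ a'` and `b' ≤ 0`. Since `a v - b v = 2v`,
the remaining bounds `a' ≤ 2` and `-2 ≤ b'` are the same two monotonicity statements.
-/

open Real

/-- The rate `a(v,l) = v e^{vl}/sinh(vl)`, extended by continuity to equal `1/l` at `v = 0`. -/
noncomputable def rateAext (l v : ℝ) : ℝ :=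
  if v = 0 then 1 / l else v * Real.exp (v * l) / Real.sinh (v * l)

/-- The rate `b(v,l) = v e^{-vl}/sinh(vl)`, extended by continuity to equal `1/l` at `v = 0`. -/
noncomputable def rateBext (l v : ℝ) : ℝ :=
  if v = 0 then 1 / l else v * Real.exp (-(v * l)) / Real.sinh (v * l)

open Filter Topology

theorem antitone_of_hasDerivAt_nonpos_off {f f' : ℝ → ℝ} {c : ℝ} (hf : Continuous f)
    (hd : ∀ x ≠ c, HasDerivAt f (f' x) x) (hf' : ∀ x ≠ c, f' x ≤ 0) : Antitone f := by
  have on_convex {D : Set ℝ} (hD : Convex ℝ D) (hc : interior D ⊆ {c}ᶜ) : AntitoneOn f D :=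
    antitoneOn_of_deriv_nonpos hD hf.continuousOn
      (fun x hx => (hd x (hc hx)).differentiableAt.differentiableWithinAt)
      (fun x hx => (hd x (hc hx)).deriv ▸ hf' x (hc hx))
  exact (on_convex (convex_Iic c) (by simp)).Iic_union_Ici (on_convex (convex_Ici c) (by simp))

theorem deriv_le_of_antitone_sub_mul {f : ℝ → ℝ} {c : ℝ} (hc : 0 ≤ c)
    (hf : Antitone fun x => f x - c * x) (x : ℝ) : deriv f x ≤ c := by
  by_cases hfx : DifferentiableAt ℝ f x
  · have := hf.deriv_nonpos (x := x)
    rw [deriv_fun_sub hfx (by fun_prop), deriv_const_mul_field', deriv_id''] at this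
    linarith
  · simpa [deriv_zero_of_not_differentiableAt hfx] using hc

theorem neg_le_deriv_of_monotone_add_mul {f : ℝ → ℝ} {c : ℝ} (hc : 0 ≤ c)
    (hf : Monotone fun x => f x + c * x) (x : ℝ) : -c ≤ deriv f x := by
  by_cases hfx : DifferentiableAt ℝ f x
  · have := hf.deriv_nonneg (x := x)
    rw [deriv_fun_add hfx (by fun_prop), deriv_const_mul_field', deriv_id''] at this
    linarith
  · simpa [deriv_zero_of_not_differentiableAt hfx] using hc

/-- The Bernoulli function `x / (eˣ - 1)` of Scharfetter–Gummel discretisations, with its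
limit `1` at `0`. -/
noncomputable def bernoulliB (x : ℝ) : ℝ := if x = 0 then 1 else x / (exp x - 1)

theorem exp_sub_one_ne_zero {x : ℝ} (hx : x ≠ 0) : exp x - 1 ≠ 0 := by
  simpa [sub_eq_zero] using hx

theorem exp_sub_one_sub_mul_exp_nonpos (x : ℝ) : exp x - 1 - x * exp x ≤ 0 := by
  have h := add_one_le_exp (-x)
  have hx : exp x * exp (-x) = 1 := by rw [← exp_add]; simp
  nlinarith [exp_pos x]

theorem hasDerivAt_bernoulliB {x : ℝ} (hx : x ≠ 0) :
    HasDerivAt bernoulliB ((exp x - 1 - x * exp x) / (exp x - 1) ^ 2) x := by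
  have hB : bernoulliB =ᶠ[𝓝 x] fun y => y / (exp y - 1) := by
    filter_upwards [isOpen_ne.mem_nhds hx] with y hy
    simp [bernoulliB, hy]
  have hdiv := (hasDerivAt_id' x).div ((hasDerivAt_exp x).sub_const 1) (exp_sub_one_ne_zero hx)
  exact (hdiv.congr_deriv (by ring)).congr_of_eventuallyEq hB

theorem tendsto_bernoulliB_zero : Tendsto bernoulliB (𝓝[≠] 0) (𝓝 1) := by
  have hslope : Tendsto (fun t => t⁻¹ * (exp t - 1)) (𝓝[≠] 0) (𝓝 1) := by
    simpa using hasDerivAt_iff_tendsto_slope_zero.mp (hasDerivAt_exp 0)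
  have hinv := hslope.inv₀ one_ne_zero
  rw [inv_one] at hinv
  refine hinv.congr' ?_
  filter_upwards [self_mem_nhdsWithin] with t (ht : t ≠ 0)
  simp [bernoulliB, ht, div_eq_mul_inv, mul_comm]

theorem continuous_bernoulliB : Continuous bernoulliB := by
  refine continuous_iff_continuousAt.2 fun x => ?_
  rcases eq_or_ne x 0 with rfl | hx
  · rw [← continuousWithinAt_compl_self, ContinuousWithinAt]
    simpa [bernoulliB] using tendsto_bernoulliB_zero
  · exact (hasDerivAt_bernoulliB hx).continuousAt

theorem antitone_bernoulliB : Antitone bernoulliB :=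
  antitone_of_hasDerivAt_nonpos_off continuous_bernoulliB (fun _ => hasDerivAt_bernoulliB)
    fun x _ => div_nonpos_of_nonpos_of_nonneg (exp_sub_one_sub_mul_exp_nonpos x) (sq_nonneg _)

theorem rateBext_eq_bernoulliB {l : ℝ} (hl : l ≠ 0) (v : ℝ) :
    rateBext l v = bernoulliB (2 * l * v) / l := by
  rcases eq_or_ne v 0 with rfl | hv
  · simp [rateBext, bernoulliB]
  have hvl : v * l ≠ 0 := mul_ne_zero hv hl
  have hden : exp (v * l) * exp (v * l) - 1 ≠ 0 := by
    rw [← exp_add]; exact exp_sub_one_ne_zero (by simpa using hvl)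
  rw [rateBext, bernoulliB, if_neg hv, if_neg (by positivity), sinh_eq,
    show 2 * l * v = v * l + v * l by ring, exp_add, exp_neg]
  field_simp
  ring

theorem rateAext_eq_rateBext_neg (l v : ℝ) : rateAext l v = rateBext l (-v) := by
  rcases eq_or_ne v 0 with rfl | hv
  · simp [rateBext, rateAext]
  · simp [rateBext, rateAext, hv, neg_mul, sinh_neg, neg_div_neg_eq]

theorem rateAext_sub_rateBext {l : ℝ} (hl : l ≠ 0) (v : ℝ) :
    rateAext l v - rateBext l v = 2 * v := by
  rcases eq_or_ne v 0 with rfl | hv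
  · simp [rateBext, rateAext]
  have : sinh (v * l) ≠ 0 := by simpa using mul_ne_zero hv hl
  rw [rateBext, rateAext, if_neg hv, if_neg hv, ← sub_div, ← mul_sub,
    show exp (v * l) - exp (-(v * l)) = 2 * sinh (v * l) by rw [sinh_eq]; ring]
  field_simp

theorem antitone_rateBext {l : ℝ} (hl : 0 < l) : Antitone (rateBext l) := fun x y hxy => by
  rw [rateBext_eq_bernoulliB hl.ne', rateBext_eq_bernoulliB hl.ne']
  exact div_le_div_of_nonneg_right (antitone_bernoulliB (by gcongr)) hl.le

theorem monotone_rateAext {l : ℝ} (hl : 0 < l) : Monotone (rateAext l) := fun x y hxy => by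
  simpa only [rateAext_eq_rateBext_neg] using antitone_rateBext hl (neg_le_neg hxy)

/-- The crossing rates satisfy `0 ≤ ∂_v a(v,l) ≤ 2` and `-2 ≤ ∂_v b(v,l) ≤ 0`; in particular
`a(·,l)` is nondecreasing and `b(·,l)` is nonincreasing. -/
theorem rate_deriv_bounds (l : ℝ) (hl : 0 < l) :
    (∀ v : ℝ, 0 ≤ deriv (rateAext l) v ∧ deriv (rateAext l) v ≤ 2) ∧
    (∀ v : ℝ, -2 ≤ deriv (rateBext l) v ∧ deriv (rateBext l) v ≤ 0) ∧
    Monotone (rateAext l) ∧ Antitone (rateBext l) := by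
  have hA := monotone_rateAext hl
  have hB := antitone_rateBext hl
  have hA_sub : (fun v => rateAext l v - 2 * v) = rateBext l :=
    funext fun v => by linarith [rateAext_sub_rateBext hl.ne' v]
  have hB_add : (fun v => rateBext l v + 2 * v) = rateAext l :=
    funext fun v => by linarith [rateAext_sub_rateBext hl.ne' v]
  exact ⟨fun v => ⟨hA.deriv_nonneg, deriv_le_of_antitone_sub_mul zero_le_two (hA_sub ▸ hB) v⟩,
    fun v => ⟨neg_le_deriv_of_monotone_add_mul zero_le_two (hB_add ▸ hA) v, hB.deriv_nonpos⟩,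
    hA, hB⟩
end
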